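/- Let n = 2m, let t be a non-negative integer, let K = { y ∈ F_{2^n} : y^{2^m} = y } be the subfield F_{2^m}, let π : K → K be a bijection, let g : K → F_2, and let λ ∈ F_{2^n} be nonzero. Then the function f(x) = Tr(λ x^{2^t} π(x + x^{2^m})) + g(x + x^{2^m}) is bent on F_{2^n} if and only if λ ∉ K (equivalently, λ + λ^{2^m} ≠ 0). (Note x + x^{2^m} ∈ K for every x ∈ F_{2^n}.) -/

import Mathlib

noncomputable section

noncomputable instance (n : ℕ) : Fintype (GaloisField 2 n) := Fintype.ofFinite _

/-- `(-1)^c` for `c ∈ F_2`. -/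
def sgn (c : ZMod 2) : ℤ := if c = 0 then 1 else -1

/-- The absolute trace `Tr : F_{2^n} → F_2`. -/
def Tr {n : ℕ} (x : GaloisField 2 n) : ZMod 2 :=
  Algebra.trace (ZMod 2) (GaloisField 2 n) x

/-- Walsh–Hadamard transform of a Boolean function on `F_{2^n}`. -/
def walsh {n : ℕ} (f : GaloisField 2 n → ZMod 2) (μ : GaloisField 2 n) : ℤ :=
  ∑ x : GaloisField 2 n, sgn (f x + Tr (μ * x))

/-- `f` is bent (where `n = 2m`): all Walsh coefficients are `±2^m`. -/
def IsBent {n : ℕ} (m : ℕ) (f : GaloisField 2 n → ZMod 2) : Prop :=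
  ∀ μ, walsh f μ = 2 ^ m ∨ walsh f μ = -(2 ^ m)

/-- `fs` is the dual of the bent function `f` (where `n = 2m`). -/
def IsDualOf {n : ℕ} (m : ℕ) (fs f : GaloisField 2 n → ZMod 2) : Prop :=
  ∀ μ, walsh f μ = 2 ^ m * sgn (fs μ)

/-!
Write `K = F_{2^m}` and `T x = x + x^{2^m}`; both the kernel and the image of `T` are `K`, and
`K` is its own orthogonal for the trace form. As `T` is constant on the cosets of `K`, `f` is
affine on each coset: `f (x + k) = f x + Tr (φ x * k)` with `φ x = (λ π (T x))^{2^{-t}}`.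
Averaging the Walsh sum over the translations by `K` therefore leaves
`W_f(μ) = ∑_{x : φ x + μ ∈ K} (-1)^{f x + Tr (μ x)}`, and `φ x + μ ∈ K` iff
`T λ * π (T x) = (T μ)^{2^t}`. If `λ ∈ K` then `T λ = 0` and the sum is empty for every `μ ∉ K`.
Otherwise, `π` being a bijection of `K`, the condition says `T x = c₀` for a single `c₀`, i.e. `x`
runs over one coset `x₀ + K`, on which the summand is constant: `W_f(μ) = ±#K = ±2^m`.
-/

open Finset

open scoped Classical

lemma sgn_add (a b : ZMod 2) : sgn (a + b) = sgn a * sgn b := by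
  revert a b; decide

lemma sgn_eq_one_or_eq_neg_one (a : ZMod 2) : sgn a = 1 ∨ sgn a = -1 := by
  revert a; decide

lemma sgn_eq_one_iff {a : ZMod 2} : sgn a = 1 ↔ a = 0 := by
  revert a; decide

def signChar {G : Type*} [AddGroup G] (χ : G →+ ZMod 2) : AddChar G ℤ where
  toFun a := sgn (χ a)
  map_zero_eq_one' := by rw [map_zero]; rfl
  map_add_eq_mul' a b := by rw [map_add, sgn_add]

lemma sum_sgn_eq_ite {G : Type*} [AddGroup G] (χ : G →+ ZMod 2) (K : AddSubgroup G)
    [Fintype K] :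
    ∑ k : K, sgn (χ k) = if ∀ k ∈ K, χ k = 0 then (Nat.card K : ℤ) else 0 := by
  have h := AddChar.sum_eq_ite (signChar (χ.comp K.subtype))
  have htriv : signChar (χ.comp K.subtype) = 0 ↔ ∀ k ∈ K, χ k = 0 := by
    simp only [AddChar.eq_zero_iff, signChar, AddChar.coe_mk, AddMonoidHom.coe_comp,
      AddSubgroup.coe_subtype, Function.comp_apply, sgn_eq_one_iff, Subtype.forall]
  simp only [htriv] at h
  rw [Nat.card_eq_fintype_card]
  exact h

lemma even_walsh {n : ℕ} (f : GaloisField 2 n → ZMod 2) (μ : GaloisField 2 n) :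
    Even (walsh f μ) := by
  obtain ⟨k, -, hk⟩ := FiniteField.card (GaloisField 2 n) 2
  have hsgn : ∀ a : ZMod 2, ((sgn a : ℤ) : ZMod 2) = 1 := by decide
  rw [← ZMod.intCast_eq_zero_iff_even, walsh, Int.cast_sum]
  simp only [hsgn, sum_const, card_univ, hk, nsmul_eq_mul, mul_one, Nat.cast_pow,
    ZMod.natCast_self, zero_pow k.ne_zero]

section RelTrace

variable {F : Type*} [Field F]

lemma trace_pow_two_pow [Fintype F] [Algebra (ZMod 2) F] (j : ℕ) (x : F) :
    Algebra.trace (ZMod 2) F (x ^ 2 ^ j) = Algebra.trace (ZMod 2) F x := by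
  have h := Algebra.trace_eq_of_algEquiv
    (FiniteField.frobeniusAlgEquivOfAlgebraic (ZMod 2) F ^ j) x
  rwa [AlgEquiv.coe_pow, FiniteField.coe_frobeniusAlgEquivOfAlgebraic_iterate, ZMod.card] at h

lemma pow_two_pow_pow_two_pow [Fintype F] {m : ℕ} (hF : Fintype.card F = 2 ^ (2 * m)) (x : F) :
    (x ^ 2 ^ m) ^ 2 ^ m = x := by
  rw [← pow_mul, ← pow_add, ← two_mul, ← hF, FiniteField.pow_card]

variable [CharP F 2] {m : ℕ}

variable (F) in
/-- When `#F = 2^{2m}`, the relative trace of `F` over its subfield `F_{2^m}`; that subfield is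
the kernel. -/
def relTrace (m : ℕ) : F →+ F :=
  AddMonoidHom.mk' (fun x => x + x ^ 2 ^ m) fun x y => by rw [add_pow_char_pow]; ring

lemma relTrace_apply (x : F) : relTrace F m x = x + x ^ 2 ^ m := rfl

lemma mem_ker_relTrace {x : F} : x ∈ (relTrace F m).ker ↔ x ^ 2 ^ m = x := by
  rw [AddMonoidHom.mem_ker, relTrace_apply, CharTwo.add_eq_zero, eq_comm]

lemma map_relTrace {G : Type*} [FunLike G F F] [RingHomClass G F F] (σ : G) (x : F) :
    σ (relTrace F m x) = relTrace F m (σ x) := by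
  rw [relTrace_apply, relTrace_apply, map_add, map_pow]

lemma relTrace_mul_of_mem_ker (a : F) {k : F} (hk : k ∈ (relTrace F m).ker) :
    relTrace F m (a * k) = relTrace F m a * k := by
  rw [relTrace_apply, relTrace_apply, mul_pow, mem_ker_relTrace.mp hk, add_mul]

lemma iterateFrobeniusEquiv_symm_add_mem_ker_iff [PerfectRing F 2] (t : ℕ) (a μ : F) :
    (iterateFrobeniusEquiv F 2 t).symm a + μ ∈ (relTrace F m).ker ↔
      relTrace F m a = relTrace F m μ ^ 2 ^ t := by
  rw [AddMonoidHom.mem_ker, map_add, CharTwo.add_eq_zero,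
    ← map_relTrace (iterateFrobeniusEquiv F 2 t).symm, RingEquiv.symm_apply_eq,
    iterateFrobeniusEquiv_def]

lemma coe_ker_relTrace : ((relTrace F m).ker : Set F) = {y | y ^ 2 ^ m = y} :=
  Set.ext fun _ => mem_ker_relTrace

lemma card_ker_relTrace_le [Fintype F] (hm : m ≠ 0) : Nat.card (relTrace F m).ker ≤ 2 ^ m := by
  open Polynomial in
  have hdeg : (X ^ 2 ^ m - X : F[X]).natDegree = 2 ^ m := by
    rw [natDegree_sub_eq_left_of_natDegree_lt] <;>
      simp [Nat.one_lt_two_pow hm]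
  have hroots : (univ.filter (· ∈ (relTrace F m).ker)).val ⊆ (X ^ 2 ^ m - X : F[X]).roots := by
    intro x hx
    rw [mem_roots (FiniteField.X_pow_card_pow_sub_X_ne_zero F hm one_lt_two), IsRoot.def,
      eval_sub, eval_pow, eval_X, sub_eq_zero, ← mem_ker_relTrace]
    simpa using hx
  rw [Nat.card_eq_fintype_card, Fintype.card_subtype, ← hdeg]
  exact card_le_degree_of_subset_roots hroots

variable [Fintype F] (hF : Fintype.card F = 2 ^ (2 * m))
include hF

lemma range_relTrace_le_ker : (relTrace F m).range ≤ (relTrace F m).ker := by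
  rintro _ ⟨x, rfl⟩
  rw [mem_ker_relTrace, relTrace_apply, add_pow_char_pow, pow_two_pow_pow_two_pow hF, add_comm]

lemma card_ker_relTrace_mul_card_range :
    Nat.card (relTrace F m).ker * Nat.card (relTrace F m).range = 2 ^ m * 2 ^ m := by
  rw [← AddSubgroup.index_ker, AddSubgroup.card_mul_index, Nat.card_eq_fintype_card, hF,
    two_mul, pow_add]

omit [CharP F 2] in
lemma ne_zero_of_card_eq_two_pow : m ≠ 0 := by
  rintro rfl
  exact Fintype.one_lt_card.ne' hF

lemma card_ker_relTrace : Nat.card (relTrace F m).ker = 2 ^ m := by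
  have hle := card_ker_relTrace_le (F := F) (ne_zero_of_card_eq_two_pow hF)
  have hrange := AddSubgroup.card_le_of_le (range_relTrace_le_ker hF)
  nlinarith [card_ker_relTrace_mul_card_range hF]

lemma range_relTrace : (relTrace F m).range = (relTrace F m).ker := by
  refine AddSubgroup.eq_of_le_of_card_ge (range_relTrace_le_ker hF) ?_
  have h := card_ker_relTrace_mul_card_range hF
  rw [card_ker_relTrace hF] at h ⊢
  exact (Nat.eq_of_mul_eq_mul_left (by positivity) h).ge

lemma exists_relTrace_ne_zero : ∃ x : F, relTrace F m x ≠ 0 := by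
  by_contra! h
  have hbot : (relTrace F m).range = ⊥ := by
    rw [eq_bot_iff]
    rintro _ ⟨x, rfl⟩
    exact h x
  have hcard := card_ker_relTrace hF
  rw [← range_relTrace hF, hbot, AddSubgroup.card_bot] at hcard
  exact (Nat.one_lt_two_pow (ne_zero_of_card_eq_two_pow hF)).ne hcard

end RelTrace

section Walsh

variable {n : ℕ}

lemma tr_add (x y : GaloisField 2 n) : Tr (x + y) = Tr x + Tr y := map_add _ x y

lemma tr_pow_two_pow (j : ℕ) (x : GaloisField 2 n) : Tr (x ^ 2 ^ j) = Tr x :=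
  trace_pow_two_pow j x

def IsTraceOrthogonal (K : AddSubgroup (GaloisField 2 n)) (β : GaloisField 2 n) : Prop :=
  ∀ k ∈ K, Tr (β * k) = 0

lemma sum_sgn_tr_mul (K : AddSubgroup (GaloisField 2 n)) (β : GaloisField 2 n) :
    ∑ k : K, sgn (Tr (β * (k : GaloisField 2 n))) =
      if IsTraceOrthogonal K β then (Nat.card K : ℤ) else 0 :=
  sum_sgn_eq_ite
    ((Algebra.trace (ZMod 2) (GaloisField 2 n)).toAddMonoidHom.comp (AddMonoidHom.mulLeft β)) K

lemma tr_relTrace (m : ℕ) (x : GaloisField 2 n) : Tr (relTrace _ m x) = 0 := by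
  rw [relTrace_apply, tr_add, tr_pow_two_pow, CharTwo.add_self_eq_zero]

lemma tr_mul_relTrace {m : ℕ} (hF : Fintype.card (GaloisField 2 n) = 2 ^ (2 * m))
    (β x : GaloisField 2 n) : Tr (β * relTrace _ m x) = Tr (relTrace _ m β * x) := by
  have h : Tr (β * x ^ 2 ^ m) = Tr (β ^ 2 ^ m * x) := by
    rw [← tr_pow_two_pow m (β ^ 2 ^ m * x), mul_pow, pow_two_pow_pow_two_pow hF]
  rw [relTrace_apply, relTrace_apply, mul_add, add_mul, tr_add, tr_add, h]

lemma isTraceOrthogonal_ker_relTrace_iff {m : ℕ}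
    (hF : Fintype.card (GaloisField 2 n) = 2 ^ (2 * m)) {β : GaloisField 2 n} :
    IsTraceOrthogonal (relTrace _ m).ker β ↔ β ∈ (relTrace _ m).ker := by
  constructor
  · intro hβ
    have hdual : ∀ x, Tr (relTrace _ m β * x) = 0 := fun x => by
      rw [← tr_mul_relTrace hF]
      exact hβ _ (range_relTrace_le_ker hF ⟨x, rfl⟩)
    have := Fact.mk Nat.prime_two
    exact (traceForm_nondegenerate (ZMod 2) (GaloisField 2 n)).1 _ hdual
  · intro hβ k hk
    obtain ⟨x, hx⟩ : β * k ∈ (relTrace _ m).range := by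
      rw [range_relTrace hF]
      exact mem_ker_relTrace.2 (by rw [mul_pow, mem_ker_relTrace.1 hβ, mem_ker_relTrace.1 hk])
    rw [← hx, tr_relTrace]

variable {f : GaloisField 2 n → ZMod 2} {K : AddSubgroup (GaloisField 2 n)}
  {φ : GaloisField 2 n → GaloisField 2 n}

lemma add_tr_mul_add_of_mem (hf : ∀ x, ∀ k ∈ K, f (x + k) = f x + Tr (φ x * k))
    (μ x : GaloisField 2 n) {k : GaloisField 2 n} (hk : k ∈ K) :
    f (x + k) + Tr (μ * (x + k)) = f x + Tr (μ * x) + Tr ((φ x + μ) * k) := by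
  rw [hf x k hk, mul_add, add_mul, tr_add, tr_add]
  ring

theorem walsh_eq_sum_filter (hf : ∀ x, ∀ k ∈ K, f (x + k) = f x + Tr (φ x * k))
    (μ : GaloisField 2 n) :
    walsh f μ = ∑ x with IsTraceOrthogonal K (φ x + μ), sgn (f x + Tr (μ * x)) := by
  refine mul_left_cancel₀ (Nat.cast_ne_zero.2 Nat.card_pos.ne' : (Nat.card K : ℤ) ≠ 0) ?_
  calc (Nat.card K : ℤ) * walsh f μ
      = ∑ k : K, ∑ x, sgn (f (x + k) + Tr (μ * (x + (k : GaloisField 2 n)))) := by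
        rw [Nat.card_eq_fintype_card, ← nsmul_eq_mul, ← card_univ, ← sum_const]
        exact sum_congr rfl fun k _ =>
          (Fintype.sum_equiv (Equiv.addRight (k : GaloisField 2 n)) _ _ fun _ => rfl).symm
    _ = ∑ x, sgn (f x + Tr (μ * x)) *
          ∑ k : K, sgn (Tr ((φ x + μ) * (k : GaloisField 2 n))) := by
        rw [sum_comm]
        refine sum_congr rfl fun x _ => ?_
        rw [mul_sum]
        exact sum_congr rfl fun k _ => by rw [add_tr_mul_add_of_mem hf μ x k.2, sgn_add]
    _ = (Nat.card K : ℤ) * ∑ x with IsTraceOrthogonal K (φ x + μ), sgn (f x + Tr (μ * x)) := by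
        rw [sum_filter, mul_sum]
        refine sum_congr rfl fun x _ => ?_
        rw [sum_sgn_tr_mul]
        split_ifs <;> ring

theorem walsh_eq_of_isTraceOrthogonal_iff (hf : ∀ x, ∀ k ∈ K, f (x + k) = f x + Tr (φ x * k))
    {μ x₀ : GaloisField 2 n} (hx₀ : ∀ x, IsTraceOrthogonal K (φ x + μ) ↔ x - x₀ ∈ K) :
    walsh f μ = sgn (f x₀ + Tr (μ * x₀)) * Nat.card K := by
  have hconst : ∀ x ∈ univ.filter (fun x => x - x₀ ∈ K),
      sgn (f x + Tr (μ * x)) = sgn (f x₀ + Tr (μ * x₀)) := by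
    intro x hx
    rw [← add_sub_cancel x₀ x, add_tr_mul_add_of_mem hf μ x₀ (mem_filter.1 hx).2,
      (hx₀ x₀).2 (by simp) _ (mem_filter.1 hx).2, add_zero]
  have hcard : #(univ.filter fun x => x - x₀ ∈ K) = Nat.card K := by
    rw [← Fintype.card_subtype, Nat.card_eq_fintype_card]
    exact Fintype.card_congr ((Equiv.subRight x₀).subtypeEquiv fun _ => Iff.rfl)
  rw [walsh_eq_sum_filter hf, filter_congr fun x _ => hx₀ x, sum_congr rfl hconst, sum_const,
    hcard, nsmul_eq_mul, mul_comm]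

end Walsh

section MaioranaMcFarland

variable {n m : ℕ} (t : ℕ) (lam : GaloisField 2 n) (π : GaloisField 2 n → GaloisField 2 n)
  (g : GaloisField 2 n → ZMod 2)

def mmFunction (m : ℕ) (x : GaloisField 2 n) : ZMod 2 :=
  Tr (lam * x ^ 2 ^ t * π (relTrace _ m x)) + g (relTrace _ m x)

lemma mmFunction_add_of_mem_ker (x : GaloisField 2 n) {k : GaloisField 2 n}
    (hk : k ∈ (relTrace _ m).ker) :
    mmFunction t lam π g m (x + k) = mmFunction t lam π g m x +
      Tr ((iterateFrobeniusEquiv _ 2 t).symm (lam * π (relTrace _ m x)) * k) := by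
  set r := (iterateFrobeniusEquiv (GaloisField 2 n) 2 t).symm (lam * π (relTrace _ m x))
  have hroot : r ^ 2 ^ t = lam * π (relTrace _ m x) := by
    rw [← iterateFrobeniusEquiv_def, RingEquiv.apply_symm_apply]
  have hr : Tr (lam * k ^ 2 ^ t * π (relTrace _ m x)) = Tr (r * k) := by
    rw [← tr_pow_two_pow t (r * k), mul_pow, hroot, mul_right_comm]
  have hrel : relTrace _ m (x + k) = relTrace _ m x := by
    rw [map_add, AddMonoidHom.mem_ker.1 hk, add_zero]
  rw [mmFunction, mmFunction, hrel, add_pow_char_pow, mul_add, add_mul, tr_add, hr]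
  ring

variable {lam π} (hF : Fintype.card (GaloisField 2 n) = 2 ^ (2 * m))
include hF

lemma isTraceOrthogonal_iff_of_mapsTo
    (hπ : Set.MapsTo π (relTrace (GaloisField 2 n) m).ker (relTrace (GaloisField 2 n) m).ker)
    (x μ : GaloisField 2 n) :
    IsTraceOrthogonal (relTrace _ m).ker
        ((iterateFrobeniusEquiv _ 2 t).symm (lam * π (relTrace _ m x)) + μ) ↔
      relTrace _ m lam * π (relTrace _ m x) = relTrace _ m μ ^ 2 ^ t := by
  rw [isTraceOrthogonal_ker_relTrace_iff hF, iterateFrobeniusEquiv_symm_add_mem_ker_iff,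
    relTrace_mul_of_mem_ker _ (hπ (range_relTrace_le_ker hF ⟨x, rfl⟩))]

lemma walsh_mmFunction_eq_zero
    (hπ : Set.MapsTo π (relTrace (GaloisField 2 n) m).ker (relTrace (GaloisField 2 n) m).ker)
    (hlam : relTrace _ m lam = 0) {μ : GaloisField 2 n}
    (hμ : relTrace _ m μ ≠ 0) : walsh (mmFunction t lam π g m) μ = 0 := by
  rw [walsh_eq_sum_filter fun x _ => mmFunction_add_of_mem_ker t lam π g x]
  refine sum_eq_zero fun x hx => absurd (mem_filter.1 hx).2 ?_
  rw [isTraceOrthogonal_iff_of_mapsTo t hF hπ, hlam, zero_mul, eq_comm]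
  exact pow_ne_zero _ hμ

lemma exists_walsh_mmFunction_eq_sgn_mul
    (hπ : Set.BijOn π (relTrace (GaloisField 2 n) m).ker (relTrace (GaloisField 2 n) m).ker)
    (hlam : relTrace _ m lam ≠ 0) (μ : GaloisField 2 n) :
    ∃ x₀, walsh (mmFunction t lam π g m) μ =
      sgn (mmFunction t lam π g m x₀ + Tr (μ * x₀)) * 2 ^ m := by
  set d := relTrace _ m μ ^ 2 ^ t / relTrace _ m lam with hd_def
  have hd : d ^ 2 ^ m = d := by
    rw [div_pow, pow_right_comm, mem_ker_relTrace.1 (range_relTrace_le_ker hF ⟨μ, rfl⟩),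
      mem_ker_relTrace.1 (range_relTrace_le_ker hF ⟨lam, rfl⟩)]
  obtain ⟨c₀, hc₀, hπc₀⟩ := hπ.surjOn (mem_ker_relTrace.2 hd)
  obtain ⟨x₀, rfl⟩ : c₀ ∈ (relTrace _ m).range := by rwa [range_relTrace hF]
  refine ⟨x₀, ?_⟩
  rw [walsh_eq_of_isTraceOrthogonal_iff (fun x _ => mmFunction_add_of_mem_ker t lam π g x)
    fun x => ?_, card_ker_relTrace hF, Nat.cast_pow, Nat.cast_ofNat]
  rw [isTraceOrthogonal_iff_of_mapsTo t hF hπ.mapsTo, mul_comm, ← eq_div_iff hlam, ← hd_def,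
    ← hπc₀, hπ.injOn.eq_iff (range_relTrace_le_ker hF ⟨x, rfl⟩) hc₀, AddMonoidHom.mem_ker, map_sub,
    sub_eq_zero]

end MaioranaMcFarland

lemma not_isBent_zero {n : ℕ} (f : GaloisField 2 n → ZMod 2) : ¬IsBent 0 f := by
  intro hbent
  rcases hbent 0 with h | h <;>
  · have := even_walsh f 0
    rw [h] at this
    norm_num at this

theorem statement15_general {n m : ℕ} (hn : n = 2 * m) (t : ℕ)
    (π : GaloisField 2 n → GaloisField 2 n)
    (hπ : Set.BijOn π {y : GaloisField 2 n | y ^ (2 ^ m) = y}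
      {y : GaloisField 2 n | y ^ (2 ^ m) = y})
    (g : GaloisField 2 n → ZMod 2)
    (lam : GaloisField 2 n) :
    IsBent m (fun x => Tr (lam * x ^ (2 ^ t) * π (x + x ^ (2 ^ m))) + g (x + x ^ (2 ^ m))) ↔
      lam ∉ {y : GaloisField 2 n | y ^ (2 ^ m) = y} := by
  obtain rfl | hm := eq_or_ne m 0
  · simpa using not_isBent_zero _
  have hF : Fintype.card (GaloisField 2 n) = 2 ^ (2 * m) := by
    rw [← Nat.card_eq_fintype_card, GaloisField.card 2 n (by omega), hn]
  rw [← coe_ker_relTrace] at hπ ⊢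
  change IsBent m (mmFunction t lam π g m) ↔ lam ∉ (relTrace _ m).ker
  constructor
  · intro hbent hlam
    obtain ⟨μ, hμ⟩ := exists_relTrace_ne_zero hF
    have h0 := walsh_mmFunction_eq_zero t g hF hπ.mapsTo hlam hμ
    have hpos : (0 : ℤ) < 2 ^ m := by positivity
    rcases hbent μ with h | h <;> rw [h0] at h <;> linarith
  · intro hlam μ
    obtain ⟨x₀, hx₀⟩ := exists_walsh_mmFunction_eq_sgn_mul t g hF hπ hlam μ
    rcases sgn_eq_one_or_eq_neg_one (mmFunction t lam π g m x₀ + Tr (μ * x₀)) with h | h <;>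
      simp [hx₀, h]

/-- Maiorana–MacFarland type: `f(x) = Tr(λ x^{2^t} π(x+x^{2^m})) + g(x+x^{2^m})` is bent iff
`λ ∉ K`, where `K = F_{2^m}` is the subfield and `π` is a bijection of `K`. -/
theorem statement15 {n m : ℕ} (hn : n = 2 * m) (t : ℕ)
    (π : GaloisField 2 n → GaloisField 2 n)
    (hπ : Set.BijOn π {y : GaloisField 2 n | y ^ (2 ^ m) = y}
      {y : GaloisField 2 n | y ^ (2 ^ m) = y})
    (g : GaloisField 2 n → ZMod 2)
    (lam : GaloisField 2 n) (hlam : lam ≠ 0) :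
    IsBent m (fun x => Tr (lam * x ^ (2 ^ t) * π (x + x ^ (2 ^ m))) + g (x + x ^ (2 ^ m))) ↔
      lam ∉ {y : GaloisField 2 n | y ^ (2 ^ m) = y} :=
  statement15_general hn t π hπ g lam
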